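/- arXiv:2306.02420 — 2 statements merged into one kernel-verified Lean document; each statement's English description precedes it below -/
import Mathlib

section
/- Let (θ_n)_{n≥0} be an inexact BCD-PR output satisfying Assumptions (A1)–(A3). Suppose there exists δ > 0 such that τ_n^(i) ≥ L^(i) + δ for all n ≥ 1 and all i = 1,…,m, and sup_n τ_n < ∞. Then every limit point θ_∞ of the sequence (θ_n)_{n≥0} is a stationary point of f over Θ, i.e. ⟨∇f(θ_∞), θ − θ_∞⟩ ≥ 0 for all θ ∈ Θ. -/
noncomputable section

open scoped RealInnerProductSpace

namespace BCD0

/-- The `i`-th block space `ℝ^{I_i}`. -/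
abbrev Blk {m : ℕ} (I : Fin m → ℕ) (i : Fin m) : Type := EuclideanSpace ℝ (Fin (I i))

/-- The full parameter space `ℝ^{I_1 + ⋯ + I_m}`, as an ℓ²-product of the blocks. -/
abbrev Full {m : ℕ} (I : Fin m → ℕ) : Type := PiLp 2 (fun i : Fin m => EuclideanSpace ℝ (Fin (I i)))

/-- The point whose blocks `j < i` come from `a`, block `i` is `x`, and blocks `j > i`
come from `b`. -/
def mixUpd {m : ℕ} {I : Fin m → ℕ} (a b : Full I) (i : Fin m) (x : Blk I i) : Full I :=
  WithLp.toLp 2 (Function.update (fun j => if j < i then a j else b j) i x)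

/-- The marginal loss `f_n^{(i)}(x) = f(θ_n^{(1)},…,θ_n^{(i-1)}, x, θ_{n-1}^{(i+1)},…)`. -/
def fb {m : ℕ} {I : Fin m → ℕ} (f : Full I → ℝ) (θ : ℕ → Full I) (n : ℕ) (i : Fin m)
    (x : Blk I i) : ℝ :=
  f (mixUpd (θ n) (θ (n - 1)) i x)

/-- The proximally regularized marginal loss
`g_n^{(i)}(x) = f_n^{(i)}(x) + (τ_n^{(i)}/2)‖x - θ_{n-1}^{(i)}‖²`. -/
def gb {m : ℕ} {I : Fin m → ℕ} (f : Full I → ℝ) (θ : ℕ → Full I) (τ : ℕ → Fin m → ℝ)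
    (n : ℕ) (i : Fin m) (x : Blk I i) : ℝ :=
  fb f θ n i x + τ n i / 2 * ‖x - θ (n - 1) i‖ ^ 2

/-- The optimality gap `Δ_n = max_i ( g_n^{(i)}(θ_n^{(i)}) - inf_{Θ^{(i)}} g_n^{(i)} )`. -/
def gap {m : ℕ} {I : Fin m → ℕ} (f : Full I → ℝ) (θ : ℕ → Full I)
    (S : ∀ i : Fin m, Set (Blk I i)) (τ : ℕ → Fin m → ℝ) (n : ℕ) : ℝ :=
  ⨆ i, (gb f θ τ n i (θ n i) - sInf (gb f θ τ n i '' S i))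

/-!
Since `τ_n^{(i)} ≥ δ`, comparing each new block with the previous one shows that a sweep
decreases `f` by `δ/2 ‖θ_n - θ_{n-1}‖²` up to `m Δ_n`; as `f ≥ 0` and `∑ Δ_n < ∞`, the steps
`θ_n - θ_{n-1}` are square-summable and tend to `0`. Along a subsequence `θ_n → θ_∞` all the
intermediate points of the sweep therefore converge to `θ_∞` as well. Comparing `θ_n^{(i)}` with
`θ_n^{(i)} + t (y - θ_n^{(i)})` and expanding `g_n^{(i)}` to first order (block Lipschitz gradient)
gives `⟪∇g_n^{(i)}(θ_n^{(i)}), y - θ_n^{(i)}⟫ ≥ -O(t) - Δ_n / t`. In the limit the proximal part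
of this gradient vanishes because `τ_n` is bounded, and letting `t → 0` leaves block-wise
stationarity, which sums over the blocks to stationarity over `Θ`.
-/

open Filter Topology Set
open scoped NNReal

section Gradient

variable {E : Type*} [NormedAddCommGroup E] [InnerProductSpace ℝ E] [CompleteSpace E]

theorem _root_.ContDiff.continuous_gradient {f : E → ℝ} (hf : ContDiff ℝ 1 f) :
    Continuous (gradient f) :=
  (InnerProductSpace.toDual ℝ E).symm.continuous.comp (hf.continuous_fderiv one_ne_zero)

/-- The descent lemma with the constant `K` in place of `K / 2`, which suffices here. -/
theorem le_add_inner_gradient_add_of_lipschitz {f : E → ℝ} (hf : Differentiable ℝ f) {x v : E}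
    {K : ℝ≥0} (hK : ∀ s ∈ Icc (0 : ℝ) 1, dist (gradient f (x + s • v)) (gradient f x) ≤
      K * dist (x + s • v) x) :
    f (x + v) ≤ f x + ⟪gradient f x, v⟫ + K * ‖v‖ ^ 2 := by
  set d := ⟪gradient f x, v⟫
  have hderiv : ∀ s : ℝ, HasDerivAt (fun s => f (x + s • v) - s * d)
      ⟪gradient f (x + s • v) - gradient f x, v⟫ s := by
    intro s
    have hline : HasDerivAt (fun s : ℝ => x + s • v) v s := by
      simpa using ((hasDerivAt_id s).smul_const v).const_add x
    have h := ((hf _).hasGradientAt.hasFDerivAt.comp_hasDerivAt s hline).sub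
      ((hasDerivAt_id s).mul_const d)
    rwa [InnerProductSpace.toDual_apply_apply, one_mul, ← inner_sub_left] at h
  have hbound : ∀ s ∈ Ico (0 : ℝ) 1,
      ‖⟪gradient f (x + s • v) - gradient f x, v⟫‖ ≤ K * ‖v‖ ^ 2 := by
    intro s hs
    have hlip := hK s (Ico_subset_Icc_self hs)
    rw [dist_eq_norm, dist_eq_norm, add_sub_cancel_left, norm_smul, Real.norm_of_nonneg hs.1]
      at hlip
    calc ‖⟪gradient f (x + s • v) - gradient f x, v⟫‖
        ≤ ‖gradient f (x + s • v) - gradient f x‖ * ‖v‖ := norm_inner_le_norm _ _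
      _ ≤ K * (s * ‖v‖) * ‖v‖ := by gcongr
      _ ≤ K * (1 * ‖v‖) * ‖v‖ := by gcongr; exact hs.2.le
      _ = K * ‖v‖ ^ 2 := by ring
  have hmvt := norm_image_sub_le_of_norm_deriv_le_segment_01'
    (fun s _ => (hderiv s).hasDerivWithinAt) hbound
  simp only [one_smul, zero_smul, add_zero, one_mul, zero_mul, sub_zero] at hmvt
  linarith [(abs_le.mp (Real.norm_eq_abs _ ▸ hmvt)).2]

end Gradient

theorem nonneg_of_forall_neg_mul_le {a K : ℝ} (h : ∀ t, 0 < t → t ≤ 1 → -(K * t) ≤ a) :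
    0 ≤ a := by
  have hcont : Continuous fun t : ℝ => -(K * t) := by fun_prop
  have hlim : Tendsto (fun t => -(K * t)) (𝓝[>] 0) (𝓝 0) := by
    simpa using (hcont.tendsto 0).mono_left nhdsWithin_le_nhds
  refine le_of_tendsto hlim ?_
  filter_upwards [Ioc_mem_nhdsGT one_pos] with t ht using h t ht.1 ht.2

theorem summable_of_add_le_add {u a e : ℕ → ℝ} (hu : ∀ n, 0 ≤ u n) (ha : ∀ n, 0 ≤ a n)
    (he : Summable e) (he0 : ∀ n, 0 ≤ e n) (h : ∀ n, u (n + 1) + a n ≤ u n + e n) :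
    Summable a := by
  refine summable_of_sum_range_le ha (c := u 0 + ∑' n, e n) fun N => ?_
  have htel : ∑ n ∈ Finset.range N, a n ≤ u 0 - u N + ∑ n ∈ Finset.range N, e n := by
    rw [← Finset.sum_range_sub' u N, ← Finset.sum_add_distrib]
    exact Finset.sum_le_sum fun n _ => by linarith [h n]
  linarith [hu N, he.sum_le_tsum (Finset.range N) fun n _ => he0 n]

section Blocks

variable {m : ℕ} {I : Fin m → ℕ}

theorem inner_single_right (u : Full I) (i : Fin m) (v : Blk I i) :
    ⟪u, PiLp.single 2 i v⟫ = ⟪u i, v⟫ := by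
  rw [PiLp.inner_apply, Finset.sum_eq_single i (fun j _ hj => by simp [hj]) (by simp)]
  simp

theorem toLp_update_add (B : Full I) (i : Fin m) (v : Blk I i) :
    WithLp.toLp 2 (Function.update B.ofLp i (B i + v)) = B + PiLp.single 2 i v := by
  ext j : 1
  by_cases hj : j = i
  · subst hj; simp
  · simp [hj]

theorem le_add_inner_gradient_update {f : Full I → ℝ} (hf : Differentiable ℝ f) {B : Full I}
    {i : Fin m} {T : Set (Blk I i)} (hT : Convex ℝ T) {K : ℝ≥0}
    (hK : LipschitzOnWith K (fun x => gradient f (WithLp.toLp 2 (Function.update B.ofLp i x))) T)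
    {v : Blk I i} (hB : B i ∈ T) (hBv : B i + v ∈ T) :
    f (WithLp.toLp 2 (Function.update B.ofLp i (B i + v))) ≤
      f B + ⟪(gradient f B) i, v⟫ + K * ‖v‖ ^ 2 := by
  have hsingle : ∀ s : ℝ, s • PiLp.single 2 i v = PiLp.single 2 i (s • v) := fun s => by
    ext j : 1; by_cases hj : j = i
    · subst hj; simp
    · simp [hj]
  rw [toLp_update_add]
  convert le_add_inner_gradient_add_of_lipschitz hf (x := B) (K := K) fun s hs => ?_ using 2
  · rw [inner_single_right]
  · rw [PiLp.norm_single]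
  have hdist : dist (B + s • PiLp.single 2 i v) B = dist (B i + s • v) (B i) := by
    rw [dist_eq_norm, dist_eq_norm, add_sub_cancel_left, add_sub_cancel_left, hsingle,
      PiLp.norm_single]
  have hlip := hK.dist_le_mul _ (hT.add_smul_mem hB hBv hs) _ hB
  rwa [toLp_update_add, Function.update_eq_self, WithLp.toLp_ofLp, ← hsingle, ← hdist] at hlip

@[simp]
theorem mixUpd_apply_self (a b : Full I) (i : Fin m) (x : Blk I i) : mixUpd a b i x i = x := by
  simp [mixUpd]

theorem toLp_update_mixUpd (a b : Full I) (i : Fin m) (x y : Blk I i) :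
    WithLp.toLp 2 (Function.update (mixUpd a b i x).ofLp i y) = mixUpd a b i y := by
  simp [mixUpd]

theorem mixUpd_mem {S : ∀ i : Fin m, Set (Blk I i)} {a b : Full I} (ha : ∀ j, a j ∈ S j)
    (hb : ∀ j, b j ∈ S j) {i : Fin m} {x : Blk I i} (hx : x ∈ S i) (j : Fin m) :
    mixUpd a b i x j ∈ S j := by
  by_cases hj : j = i
  · subst hj; simpa using hx
  · simp only [mixUpd, WithLp.ofLp_toLp, Function.update_of_ne hj]
    split_ifs
    exacts [ha j, hb j]

theorem mixUpd_self_self (a : Full I) (i : Fin m) : mixUpd a a i (a i) = a := by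
  ext j : 1
  by_cases hj : j = i
  · subst hj; simp
  · simp [mixUpd]

theorem continuous_mixUpd_apply (i : Fin m) :
    Continuous fun ab : Full I × Full I => mixUpd ab.1 ab.2 i (ab.1 i) := by
  refine (PiLp.continuous_toLp 2 _).comp (continuous_pi fun j => ?_)
  by_cases hj : j = i
  · subst hj
    simp only [Function.update_self]
    exact (PiLp.continuous_apply 2 _ j).comp continuous_fst
  · simp only [Function.update_of_ne hj]
    split_ifs
    exacts [(PiLp.continuous_apply 2 _ j).comp continuous_fst,
      (PiLp.continuous_apply 2 _ j).comp continuous_snd]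

def sweep (a b : Full I) (k : ℕ) : Full I :=
  WithLp.toLp 2 fun j => if (j : ℕ) < k then a j else b j

theorem sweep_zero (a b : Full I) : sweep a b 0 = b := by
  ext j : 1; simp [sweep]

theorem sweep_last (a b : Full I) : sweep a b m = a := by
  ext j : 1; simp [sweep]

theorem mixUpd_eq_sweep (a b : Full I) (i : Fin m) : mixUpd a b i (b i) = sweep a b i := by
  ext j : 1
  by_cases hj : j = i
  · subst hj; simp [sweep]
  · have hlt : (j < i) = ((j : ℕ) < i) := propext Fin.lt_def
    simp only [mixUpd, sweep, WithLp.ofLp_toLp, Function.update_of_ne hj, hlt]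

theorem mixUpd_eq_sweep_succ (a b : Full I) (i : Fin m) :
    mixUpd a b i (a i) = sweep a b (i + 1) := by
  ext j : 1
  by_cases hj : j = i
  · subst hj; simp [sweep]
  · have hlt : (j < i) = ((j : ℕ) < i + 1) :=
      propext (by rw [Fin.lt_def]; have := fun h => hj (Fin.ext h); omega)
    simp only [mixUpd, sweep, WithLp.ofLp_toLp, Function.update_of_ne hj, hlt]

end Blocks

section Iterates

variable {m : ℕ} {I : Fin m → ℕ} {S : ∀ i : Fin m, Set (Blk I i)} {f : Full I → ℝ}
  {τ : ℕ → Fin m → ℝ} {θ : ℕ → Full I} {n : ℕ} {i : Fin m}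

theorem sInf_le_gb (hf0 : ∀ x, 0 ≤ f x) (hτ : 0 ≤ τ n i) {y : Blk I i} (hy : y ∈ S i) :
    sInf (gb f θ τ n i '' S i) ≤ gb f θ τ n i y := by
  refine csInf_le ⟨0, ?_⟩ ⟨y, hy, rfl⟩
  rintro _ ⟨z, -, rfl⟩
  exact add_nonneg (hf0 _) (by positivity)

theorem gb_le_gb_add_gap (hf0 : ∀ x, 0 ≤ f x) (hτ : 0 ≤ τ n i) {y : Blk I i} (hy : y ∈ S i) :
    gb f θ τ n i (θ n i) ≤ gb f θ τ n i y + gap f θ S τ n := by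
  have hgap : gb f θ τ n i (θ n i) - sInf (gb f θ τ n i '' S i) ≤ gap f θ S τ n :=
    le_ciSup (f := fun i => gb f θ τ n i (θ n i) - sInf (gb f θ τ n i '' S i))
      (Set.finite_range _).bddAbove i
  linarith [sInf_le_gb (θ := θ) hf0 hτ hy]

theorem gap_nonneg (hf0 : ∀ x, 0 ≤ f x) (hτ : ∀ i, 0 ≤ τ n i) (hθ : ∀ i, θ n i ∈ S i) :
    0 ≤ gap f θ S τ n :=
  Real.iSup_nonneg fun i => sub_nonneg.2 (sInf_le_gb hf0 (hτ i) (hθ i))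

theorem sufficient_decrease (hf0 : ∀ x, 0 ≤ f x) {δ : ℝ} (hδ : 0 ≤ δ)
    (hτ : ∀ i, δ ≤ τ (n + 1) i) (hθ : ∀ i, θ n i ∈ S i) :
    f (θ (n + 1)) + δ / 2 * ‖θ (n + 1) - θ n‖ ^ 2 ≤ f (θ n) + m * gap f θ S τ (n + 1) := by
  set P := sweep (θ (n + 1)) (θ n)
  have hblock : ∀ i : Fin m, f (P (i + 1)) - f (P i) + δ / 2 * ‖θ (n + 1) i - θ n i‖ ^ 2 ≤
      gap f θ S τ (n + 1) := by
    intro i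
    have h := gb_le_gb_add_gap (θ := θ) hf0 (hδ.trans (hτ i)) (hθ i)
    simp only [gb, fb, add_tsub_cancel_right, sub_self, norm_zero, mixUpd_eq_sweep_succ,
      mixUpd_eq_sweep] at h
    nlinarith [hτ i, sq_nonneg ‖θ (n + 1) i - θ n i‖]
  have hsum := Finset.sum_le_sum fun i (_ : i ∈ Finset.univ) => hblock i
  rw [Finset.sum_add_distrib, Fin.sum_univ_eq_sum_range (fun k => f (P (k + 1)) - f (P k)),
    Finset.sum_range_sub (fun k => f (P k)), ← Finset.mul_sum, Finset.sum_const, Finset.card_univ,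
    Fintype.card_fin, nsmul_eq_mul] at hsum
  simp only [P, sweep_zero, sweep_last] at hsum
  rw [PiLp.norm_sq_eq_of_L2]
  simp only [PiLp.sub_apply]
  linarith

/-- `∇g_n^{(i)}(θ_n^{(i)})`: the gradient of the proximal surrogate at the new block. -/
def gbGrad (f : Full I → ℝ) (θ : ℕ → Full I) (τ : ℕ → Fin m → ℝ) (n : ℕ) (i : Fin m) :
    Blk I i :=
  (gradient f (mixUpd (θ n) (θ (n - 1)) i (θ n i))) i + τ n i • (θ n i - θ (n - 1) i)

theorem neg_mul_sub_gap_div_le_inner_gbGrad {L : ℝ} (hf : Differentiable ℝ f)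
    (hf0 : ∀ x, 0 ≤ f x) (hS : Convex ℝ (S i)) (hL : 0 ≤ L)
    (hA1 : ∀ b : Full I, (∀ j, b j ∈ S j) → LipschitzOnWith (Real.toNNReal L)
      (fun x : Blk I i => gradient f (WithLp.toLp 2 (Function.update b i x))) (S i))
    (hτ : 0 ≤ τ n i) (hθ : ∀ j, θ n j ∈ S j) (hθ' : ∀ j, θ (n - 1) j ∈ S j)
    {y : Blk I i} (hy : y ∈ S i) {t : ℝ} (ht0 : 0 < t) (ht1 : t ≤ 1) :
    -((L + τ n i) * ‖y - θ n i‖ ^ 2 * t) - gap f θ S τ n / t ≤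
      ⟪gbGrad f θ τ n i, y - θ n i⟫ := by
  set x := θ n i
  set c := θ (n - 1) i
  set v := y - x
  set M := mixUpd (θ n) (θ (n - 1)) i x
  have hz : x + t • v ∈ S i := hS.add_smul_sub_mem (hθ i) hy ⟨ht0.le, ht1⟩
  have hfb : fb f θ n i (x + t • v) ≤
      fb f θ n i x + t * ⟪(gradient f M) i, v⟫ + L * (t ^ 2 * ‖v‖ ^ 2) := by
    have h := le_add_inner_gradient_update hf hS (hA1 M (mixUpd_mem hθ hθ' (hθ i)))
      (v := t • v) (by simpa [M] using hθ i) (by simpa [M] using hz)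
    simpa only [fb, M, mixUpd_apply_self, toLp_update_mixUpd, Real.coe_toNNReal L hL,
      real_inner_smul_right, norm_smul, mul_pow, Real.norm_eq_abs, sq_abs] using h
  have hsq : ‖x + t • v - c‖ ^ 2 = ‖x - c‖ ^ 2 + 2 * t * ⟪x - c, v⟫ + t ^ 2 * ‖v‖ ^ 2 := by
    rw [add_sub_right_comm, norm_add_sq_real, real_inner_smul_right, norm_smul, mul_pow,
      Real.norm_eq_abs, sq_abs]
    ring
  have hopt := gb_le_gb_add_gap (θ := θ) hf0 hτ hz
  have hkey : 0 ≤ gap f θ S τ n + t * ⟪gbGrad f θ τ n i, v⟫ + (L + τ n i) * ‖v‖ ^ 2 * t ^ 2 := by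
    simp only [gb] at hopt
    rw [hsq] at hopt
    rw [gbGrad, inner_add_left, real_inner_smul_left]
    nlinarith [mul_nonneg hτ (mul_nonneg (sq_nonneg t) (sq_nonneg ‖v‖))]
  have hdiv : -((L + τ n i) * ‖v‖ ^ 2 * t) - gap f θ S τ n / t =
      (-((L + τ n i) * ‖v‖ ^ 2 * t ^ 2) - gap f θ S τ n) / t := by
    field_simp
  rw [hdiv, div_le_iff₀ ht0]
  linarith

theorem inner_gradient_apply_sub_nonneg {L C : ℝ} (hf : ContDiff ℝ 1 f) (hf0 : ∀ x, 0 ≤ f x)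
    (hS : Convex ℝ (S i)) (hL : 0 ≤ L)
    (hA1 : ∀ b : Full I, (∀ j, b j ∈ S j) → LipschitzOnWith (Real.toNNReal L)
      (fun x : Blk I i => gradient f (WithLp.toLp 2 (Function.update b i x))) (S i))
    (hθ : ∀ n j, θ n j ∈ S j) {ν : ℕ → ℕ} (hτ : ∀ k, 0 ≤ τ (ν k) i)
    (hC : ∀ k, τ (ν k) i ≤ C) {p : Full I} (hν : Tendsto (fun k => θ (ν k)) atTop (𝓝 p))
    (hν' : Tendsto (fun k => θ (ν k - 1)) atTop (𝓝 p))
    (hgap : Tendsto (fun k => gap f θ S τ (ν k)) atTop (𝓝 0)) {y : Blk I i} (hy : y ∈ S i) :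
    0 ≤ ⟪(gradient f p) i, y - p i⟫ := by
  refine nonneg_of_forall_neg_mul_le (K := (L + C) * ‖y - p i‖ ^ 2) fun t ht0 ht1 => ?_
  have happly : ∀ {u : ℕ → Full I} {q : Full I}, Tendsto u atTop (𝓝 q) →
      Tendsto (fun k => u k i) atTop (𝓝 (q i)) := fun h =>
    ((PiLp.continuous_apply 2 _ i).tendsto _).comp h
  have hM : Tendsto (fun k => mixUpd (θ (ν k)) (θ (ν k - 1)) i (θ (ν k) i)) atTop (𝓝 p) := by
    simpa [Function.comp_def, mixUpd_self_self] using
      ((continuous_mixUpd_apply i).tendsto (p, p)).comp (hν.prodMk_nhds hν')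
  have hprox : Tendsto (fun k => τ (ν k) i • (θ (ν k) i - θ (ν k - 1) i)) atTop (𝓝 0) := by
    refine squeeze_zero_norm (fun k => ?_)
      (by simpa using ((happly hν).sub (happly hν')).norm.const_mul C)
    rw [norm_smul, Real.norm_of_nonneg (hτ k)]
    exact mul_le_mul_of_nonneg_right (hC k) (norm_nonneg _)
  have hres : Tendsto (fun k => ⟪gbGrad f θ τ (ν k) i, y - θ (ν k) i⟫) atTop
      (𝓝 ⟪(gradient f p) i, y - p i⟫) := by
    simpa [gbGrad] using ((happly ((hf.continuous_gradient.tendsto p).comp hM)).add hprox).inner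
      (tendsto_const_nhds.sub (happly hν))
  have hlow : Tendsto (fun k => -((L + C) * ‖y - θ (ν k) i‖ ^ 2 * t) - gap f θ S τ (ν k) / t)
      atTop (𝓝 (-((L + C) * ‖y - p i‖ ^ 2 * t))) := by
    simpa using ((((tendsto_const_nhds.sub (happly hν)).norm.pow 2).const_mul (L + C)).mul_const
      t).neg.sub (hgap.div_const t)
  refine le_of_tendsto_of_tendsto' hlow hres fun k => le_trans ?_
    (neg_mul_sub_gap_div_le_inner_gbGrad hf.differentiable_one hf0 hS hL hA1 (hτ k) (hθ _)
      (hθ _) hy ht0 ht1)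
  gcongr
  exact hC k

end Iterates

theorem stmt0_general {m : ℕ} {I : Fin m → ℕ}
    (S : ∀ i : Fin m, Set (Blk I i))
    (hSconv : ∀ i, Convex ℝ (S i))
    (f : Full I → ℝ) (hf : ContDiff ℝ 1 f) (hf0 : ∀ x, 0 ≤ f x)
    (L : Fin m → ℝ) (hL : ∀ i, 0 < L i)
    -- (A1): block-wise Lipschitz gradient
    (hA1 : ∀ (i : Fin m) (b : Full I), (∀ j, b j ∈ S j) →
      LipschitzOnWith (Real.toNNReal (L i))
        (fun x : Blk I i => gradient f (WithLp.toLp 2 (Function.update b i x))) (S i))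
    (τ : ℕ → Fin m → ℝ)
    (δ : ℝ) (hδ : 0 < δ)
    (hτL : ∀ n : ℕ, 1 ≤ n → ∀ i, L i + δ ≤ τ n i)
    (hτbd : ∃ C : ℝ, ∀ n i, τ n i ≤ C)
    (θ : ℕ → Full I) (hθ : ∀ n i, θ n i ∈ S i)
    -- (A3): summable optimality gaps
    (hA3 : Summable (fun n : ℕ => gap f θ S τ (n + 1))) :
    ∀ p : Full I, MapClusterPt p Filter.atTop θ →
      ∀ q : Full I, (∀ i, q i ∈ S i) → 0 ≤ ⟪gradient f p, q - p⟫ := by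
  intro p hp q hq
  obtain ⟨C, hC⟩ := hτbd
  have hτδ : ∀ n i, δ ≤ τ (n + 1) i := fun n i => by
    linarith [hτL (n + 1) (Nat.le_add_left 1 n) i, hL i]
  have hsumm : Summable fun n => ‖θ (n + 1) - θ n‖ ^ 2 :=
    (summable_mul_left_iff (by positivity : δ / 2 ≠ 0)).1 <|
      summable_of_add_le_add (fun n => hf0 (θ n)) (fun n => by positivity) (hA3.mul_left (m : ℝ))
        (fun n => mul_nonneg m.cast_nonneg (gap_nonneg hf0 (fun i => hδ.le.trans (hτδ n i))
          (hθ _)))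
        fun n => sufficient_decrease hf0 hδ.le (hτδ n) (hθ n)
  have hstep : Tendsto (fun n => θ (n + 1) - θ n) atTop (𝓝 0) := by
    rw [tendsto_zero_iff_norm_tendsto_zero]
    simpa using hsumm.tendsto_atTop_zero.sqrt
  -- Working with the indices `φ k + 1` keeps `n - 1` (in `gbGrad`, `mixUpd`) untruncated.
  have hp' : MapClusterPt p atTop fun n => θ (n + 1) := by
    change ClusterPt p (map (θ ∘ (· + 1)) atTop)
    rwa [← Filter.map_map, map_add_atTop_eq_nat]
  obtain ⟨φ, hφ, hφp⟩ := hp'.tendsto_subseq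
  have hφp' : Tendsto (fun k => θ (φ k)) atTop (𝓝 p) := by
    simpa using hφp.sub (hstep.comp hφ.tendsto_atTop)
  rw [PiLp.inner_apply]
  exact Finset.sum_nonneg fun i _ => inner_gradient_apply_sub_nonneg (ν := fun k => φ k + 1)
    hf hf0 (hSconv i) (hL i).le (hA1 i) hθ (fun k => hδ.le.trans (hτδ _ i)) (fun k => hC _ i)
    hφp (by simpa using hφp') (hA3.tendsto_atTop_zero.comp hφ.tendsto_atTop) (hq i)

/-- **Global convergence to stationary points.** Under (A1)–(A3), if the proximal
coefficients satisfy `τ_n^{(i)} ≥ L^{(i)} + δ` for some `δ > 0` and `sup_n τ_n < ∞`,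
then every limit point of an inexact BCD-PR output is a stationary point of `f` over `Θ`. -/
theorem stmt0 {m : ℕ} (hm : 0 < m) {I : Fin m → ℕ}
    (S : ∀ i : Fin m, Set (Blk I i))
    (hSne : ∀ i, (S i).Nonempty) (hSconv : ∀ i, Convex ℝ (S i))
    (f : Full I → ℝ) (hf : ContDiff ℝ 1 f) (hf0 : ∀ x, 0 ≤ f x)
    (L : Fin m → ℝ) (hL : ∀ i, 0 < L i)
    -- (A1): block-wise Lipschitz gradient
    (hA1 : ∀ (i : Fin m) (b : Full I), (∀ j, b j ∈ S j) →
      LipschitzOnWith (Real.toNNReal (L i))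
        (fun x : Blk I i => gradient f (WithLp.toLp 2 (Function.update b i x))) (S i))
    -- (A2): compact sublevel sets
    (hA2 : ∀ a : ℝ, IsCompact {x : Full I | (∀ i, x i ∈ S i) ∧ f x ≤ a})
    (τ : ℕ → Fin m → ℝ) (hτ : ∀ n i, 0 < τ n i)
    (δ : ℝ) (hδ : 0 < δ)
    (hτL : ∀ n : ℕ, 1 ≤ n → ∀ i, L i + δ ≤ τ n i)
    (hτbd : ∃ C : ℝ, ∀ n i, τ n i ≤ C)
    (θ : ℕ → Full I) (hθ : ∀ n i, θ n i ∈ S i)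
    -- (A3): summable optimality gaps
    (hA3 : Summable (fun n : ℕ => gap f θ S τ (n + 1))) :
    ∀ p : Full I, MapClusterPt p Filter.atTop θ →
      ∀ q : Full I, (∀ i, q i ∈ S i) → 0 ≤ ⟪gradient f p, q - p⟫ :=
  stmt0_general S hSconv f hf hf0 L hL hA1 τ δ hδ hτL hτbd θ hθ hA3

end BCD0
end
end

section
/- For every v ∈ 𝓚 one has 𝓙*(0, v) = h*(R*v) + f*(−v; K); consequently, the dual problem of 𝓙 is min_{v∈𝓚} f*(−v; K) + h*(R*v). -/
/-!
Substituting `z = Rx - y`, the objective of the sup defining `𝓙*(0, v)` splits as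
`(⟨x, R*v⟩ - h x) + (⟨z, -v⟩ - f z)` on `z ∈ K` and is `-∞` off `K`. The two summands
depend on independent variables, so the sup is the sum of the two sups. The splitting is
valid in `EReal` because `f` and `h` never take the value `-∞`, so `-(f z + h x) = -f z - h x`.
-/

noncomputable section

open scoped RealInnerProductSpace

namespace Dual9

/-- Properness of an extended-real-valued function: never `-∞` and somewhere finite. -/
def Proper {E : Type*} (φ : E → EReal) : Prop := (∀ x, φ x ≠ ⊥) ∧ ∃ x, φ x ≠ ⊤

/-- Convexity for extended-real-valued functions. -/
def ERealConvexOn {E : Type*} [AddCommGroup E] [Module ℝ E] (φ : E → EReal) : Prop :=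
  ∀ x y : E, ∀ a b : ℝ, 0 ≤ a → 0 ≤ b → a + b = 1 →
    φ (a • x + b • y) ≤ (a : EReal) * φ x + (b : EReal) * φ y

/-- The convex conjugate `φ*(u) = sup_x ⟨x,u⟩ - φ(x)`. -/
def conj {E : Type*} [NormedAddCommGroup E] [InnerProductSpace ℝ E] (φ : E → EReal)
    (u : E) : EReal :=
  ⨆ x : E, ((⟪x, u⟫ : ℝ) : EReal) - φ x

/-- The `C`-restricted conjugate `φ*(u; C) = sup_{z ∈ C} ⟨z,u⟩ - φ(z)`. -/
def conjOn {E : Type*} [NormedAddCommGroup E] [InnerProductSpace ℝ E] (φ : E → EReal)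
    (C : Set E) (u : E) : EReal :=
  ⨆ z ∈ C, (((⟪z, u⟫ : ℝ) : EReal) - φ z)

variable {H K : Type*} [NormedAddCommGroup H] [InnerProductSpace ℝ H] [CompleteSpace H]
  [NormedAddCommGroup K] [InnerProductSpace ℝ K] [CompleteSpace K]

attribute [local instance] Classical.propDecidable

/-- The bivariate function `𝓙(x,y) = f(Rx - y) + h(x)` if `Rx - y ∈ K`, `+∞` otherwise. -/
def Jfun (f : K → EReal) (h : H → EReal) (R : H →L[ℝ] K) (Kc : Set K)
    (x : H) (y : K) : EReal :=
  if R x - y ∈ Kc then f (R x - y) + h x else ⊤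

/-- The partial conjugate `𝓙*(0, v) = sup_{(x,y)} ⟨y, v⟩ - 𝓙(x,y)`. -/
def Jstar0 (f : K → EReal) (h : H → EReal) (R : H →L[ℝ] K) (Kc : Set K)
    (v : K) : EReal :=
  ⨆ x : H, ⨆ y : K, (((⟪y, v⟫ : ℝ) : EReal) - Jfun f h R Kc x y)

/-- The Lagrangian `𝓛(x,v) = inf_y ( 𝓙(x,y) + ⟨y,v⟩ )`. -/
def Lagr (f : K → EReal) (h : H → EReal) (R : H →L[ℝ] K) (Kc : Set K)
    (x : H) (v : K) : EReal :=
  ⨅ y : K, (Jfun f h R Kc x y + ((⟪y, v⟫ : ℝ) : EReal))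

theorem _root_.EReal.add_iSup {ι : Sort*} [Nonempty ι] (a : EReal) (g : ι → EReal) :
    a + ⨆ i, g i = ⨆ i, a + g i := by
  refine le_antisymm (EReal.add_le_of_forall_lt fun a' ha' b' hb' => ?_)
    (iSup_le fun i => add_le_add_right (le_iSup g i) a)
  obtain ⟨i, hi⟩ := lt_iSup_iff.1 hb'
  exact (add_le_add ha'.le hi.le).trans (le_iSup (fun i => a + g i) i)

theorem _root_.EReal.iSup_add {ι : Sort*} [Nonempty ι] (g : ι → EReal) (a : EReal) :
    (⨆ i, g i) + a = ⨆ i, g i + a := by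
  simp only [add_comm _ a, EReal.add_iSup]

theorem inner_sub_Jfun_eq (f : K → EReal) (h : H → EReal) (hf : ∀ z, f z ≠ ⊥)
    (hh : ∀ x, h x ≠ ⊥) (R : H →L[ℝ] K) (Kc : Set K) (v : K) (x : H) (z : K) :
    ((⟪R x - z, v⟫ : ℝ) : EReal) - Jfun f h R Kc x (R x - z) =
      (⨆ _ : z ∈ Kc, ((⟪z, -v⟫ : ℝ) : EReal) - f z) +
        (((⟪x, ContinuousLinearMap.adjoint R v⟫ : ℝ) : EReal) - h x) := by
  have hinner : ⟪R x - z, v⟫ = ⟪z, -v⟫ + ⟪x, ContinuousLinearMap.adjoint R v⟫ := by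
    rw [inner_sub_left, inner_neg_right, ContinuousLinearMap.adjoint_inner_right]
    ring
  rw [Jfun, sub_sub_cancel]
  split_ifs with hz
  · rw [iSup_pos hz, hinner, EReal.coe_add, EReal.add_sub_add_comm (.inl (hf z)) (.inr (hh x))]
  · rw [EReal.sub_top, iSup_neg hz, EReal.bot_add]

theorem iSup_inner_sub_Jfun (f : K → EReal) (h : H → EReal) (hf : ∀ z, f z ≠ ⊥)
    (hh : ∀ x, h x ≠ ⊥) (R : H →L[ℝ] K) (Kc : Set K) (v : K) (x : H) :
    ⨆ y : K, ((⟪y, v⟫ : ℝ) : EReal) - Jfun f h R Kc x y =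
      conjOn f Kc (-v) + (((⟪x, ContinuousLinearMap.adjoint R v⟫ : ℝ) : EReal) - h x) := by
  rw [← (Equiv.subLeft (R x)).iSup_comp]
  simp only [Equiv.subLeft_apply, inner_sub_Jfun_eq f h hf hh]
  exact (EReal.iSup_add _ _).symm

theorem stmt9_general
    (Kc : Set K)
    (f : K → EReal) (hfP : Proper f)
    (h : H → EReal) (hhP : Proper h)
    (R : H →L[ℝ] K) :
    ∀ v : K, Jstar0 f h R Kc v =
      conj h ((ContinuousLinearMap.adjoint R) v) + conjOn f Kc (-v) := by
  intro v
  calc Jstar0 f h R Kc v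
      = ⨆ x : H, conjOn f Kc (-v) +
          (((⟪x, ContinuousLinearMap.adjoint R v⟫ : ℝ) : EReal) - h x) :=
        iSup_congr (iSup_inner_sub_Jfun f h hfP.1 hhP.1 R Kc v)
    _ = conj h (ContinuousLinearMap.adjoint R v) + conjOn f Kc (-v) := by
        rw [← EReal.add_iSup, add_comm]
        rfl

/-- **The dual problem.** For every `v`, `J*(0,v) = h*(R*v) + f*(-v; K)`. -/
theorem stmt9
    (Kc : Set K) (hKne : Kc.Nonempty) (hKcl : IsClosed Kc) (hKconv : Convex ℝ Kc)
    (hKcone : ∀ ⦃c : ℝ⦄, 0 < c → ∀ ⦃z : K⦄, z ∈ Kc → c • z ∈ Kc)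
    (f : K → EReal) (hfP : Proper f) (hflsc : LowerSemicontinuous f)
    (hfconv : ERealConvexOn f)
    (h : H → EReal) (hhP : Proper h) (hhlsc : LowerSemicontinuous h)
    (hhconv : ERealConvexOn h)
    (R : H →L[ℝ] K)
    (hfeas : ∃ x : H, h x ≠ ⊤ ∧ R x ∈ Kc) :
    ∀ v : K, Jstar0 f h R Kc v =
      conj h ((ContinuousLinearMap.adjoint R) v) + conjOn f Kc (-v) :=
  stmt9_general Kc f hfP h hhP R

end Dual9
end
end
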